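/- arXiv:1112.0483 — 2 statements merged into one kernel-verified Lean document; each statement's English description precedes it below -/
import Mathlib

section
/- For p, q > 1, the function x ↦ log(arcsin_{p,q}(e^x)), defined for x < 0, is convex. -/
/-!
Substituting `t = eˣ s` gives `arcsin_{p,q}(eˣ) = ∫₀¹ eˣ (1 - (eˣ s)^q)^(-1/p) ds`. For fixed `s`
the integrand is log-convex in `x`: `eˣ` is log-linear, and `1 - (eˣ s)^q` is concave and positive,
hence log-concave by AM-GM, so its negative power `-1/p` is log-convex. By Hölder's inequality an
integral of log-convex functions is log-convex.
-/

open Real Set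

noncomputable def arcsinpq (p q x : ℝ) : ℝ :=
  ∫ t in (0:ℝ)..x, (1 - t ^ q) ^ (-1/p)

open MeasureTheory

section Holder

variable {α : Type*} [MeasurableSpace α] {μ : Measure α} {f g : α → ℝ} {a b : ℝ}

theorem MeasureTheory.Integrable.rpow_mul_rpow (hf₀ : 0 ≤ᵐ[μ] f) (hg₀ : 0 ≤ᵐ[μ] g)
    (hf : Integrable f μ) (hg : Integrable g μ) (ha : 0 ≤ a) (hb : 0 ≤ b) (hab : a + b = 1) :
    Integrable (fun x => f x ^ a * g x ^ b) μ := by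
  refine ((hf.const_mul a).add (hg.const_mul b)).mono' ?_ ?_
  · exact ((hf.aemeasurable.pow_const a).mul (hg.aemeasurable.pow_const b)).aestronglyMeasurable
  · filter_upwards [hf₀, hg₀] with x hfx hgx
    rw [Real.norm_of_nonneg (mul_nonneg (rpow_nonneg hfx a) (rpow_nonneg hgx b))]
    exact geom_mean_le_arith_mean2_weighted ha hb hfx hgx hab

theorem MeasureTheory.Integrable.memLp_rpow_of_nonneg (hf₀ : 0 ≤ᵐ[μ] f) (hf : Integrable f μ)
    (ha : 0 < a) :
    MemLp (fun x => f x ^ a) (ENNReal.ofReal (1 / a)) μ := by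
  have h := (memLp_one_iff_integrable.2 hf).norm_rpow_div (ENNReal.ofReal a)
  rw [ENNReal.toReal_ofReal ha.le, one_div, ← ENNReal.ofReal_inv_of_pos ha, ← one_div] at h
  refine h.ae_eq ?_
  filter_upwards [hf₀] with x hx
  rw [Real.norm_of_nonneg hx]

theorem integral_rpow_mul_rpow_le (hf₀ : 0 ≤ᵐ[μ] f) (hg₀ : 0 ≤ᵐ[μ] g) (hf : Integrable f μ)
    (hg : Integrable g μ) (ha : 0 < a) (hb : 0 < b) (hab : a + b = 1) :
    ∫ x, f x ^ a * g x ^ b ∂μ ≤ (∫ x, f x ∂μ) ^ a * (∫ x, g x ∂μ) ^ b := by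
  have rpow_rpow_inv : ∀ {h : α → ℝ} {c : ℝ}, 0 ≤ᵐ[μ] h → 0 < c →
      ∫ x, (h x ^ c) ^ (1 / c) ∂μ = ∫ x, h x ∂μ := fun {h c} h₀ hc => by
    refine integral_congr_ae ?_
    filter_upwards [h₀] with x hx
    rw [← rpow_mul hx, mul_one_div_cancel hc.ne', rpow_one]
  have := integral_mul_le_Lp_mul_Lq_of_nonneg (Real.holderConjugate_one_div ha hb hab)
    (hf₀.mono fun x hx => rpow_nonneg hx a) (hg₀.mono fun x hx => rpow_nonneg hx b)
    (hf.memLp_rpow_of_nonneg hf₀ ha) (hg.memLp_rpow_of_nonneg hg₀ hb)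
  rwa [rpow_rpow_inv hf₀ ha, rpow_rpow_inv hg₀ hb, one_div_one_div, one_div_one_div] at this

end Holder

theorem convexOn_log_comp_of_le_rpow_mul_rpow {E : Type*} [AddCommGroup E] [Module ℝ E]
    {s : Set E} (hs : Convex ℝ s) {F : E → ℝ} (hF : ∀ x ∈ s, 0 < F x)
    (h : ∀ x ∈ s, ∀ y ∈ s, ∀ a b : ℝ, 0 < a → 0 < b → a + b = 1 →
      F (a • x + b • y) ≤ F x ^ a * F y ^ b) :
    ConvexOn ℝ s (fun x => log (F x)) := by
  refine ⟨hs, fun x hx y hy a b ha hb hab => ?_⟩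
  rcases ha.eq_or_lt with rfl | ha
  · simp_all
  rcases hb.eq_or_lt with rfl | hb
  · simp_all
  have hx' := hF x hx
  have hy' := hF y hy
  calc log (F (a • x + b • y)) ≤ log (F x ^ a * F y ^ b) :=
        log_le_log (hF _ (hs hx hy ha.le hb.le hab)) (h x hx y hy a b ha hb hab)
    _ = a • log (F x) + b • log (F y) := by
        rw [log_mul (by positivity) (by positivity), log_rpow hx', log_rpow hy', smul_eq_mul,
          smul_eq_mul]

theorem ConcaveOn.rpow_mul_rpow_le {E : Type*} [AddCommGroup E] [Module ℝ E] {S : Set E}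
    {φ : E → ℝ} (hφ : ConcaveOn ℝ S φ) (hφ₀ : ∀ x ∈ S, 0 ≤ φ x) {x y : E} (hx : x ∈ S)
    (hy : y ∈ S) {a b : ℝ} (ha : 0 ≤ a) (hb : 0 ≤ b) (hab : a + b = 1) :
    φ x ^ a * φ y ^ b ≤ φ (a • x + b • y) :=
  (geom_mean_le_arith_mean2_weighted ha hb (hφ₀ x hx) (hφ₀ y hy) hab).trans (hφ.2 hx hy ha hb hab)

theorem concaveOn_one_sub_exp_mul_rpow {s : ℝ} (hs : 0 ≤ s) (q : ℝ) :
    ConcaveOn ℝ univ (fun x => 1 - (exp x * s) ^ q) := by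
  have h : ∀ x, (exp x * s) ^ q = s ^ q * exp (q * x) := fun x => by
    rw [mul_rpow (exp_pos x).le hs, ← exp_mul, mul_comm x q, mul_comm]
  refine ⟨convex_univ, fun x _ y _ a b ha hb hab => ?_⟩
  have hexp := convexOn_exp.2 (mem_univ (q * x)) (mem_univ (q * y)) ha hb hab
  simp only [smul_eq_mul, h] at hexp ⊢
  rw [show q * (a * x + b * y) = a * (q * x) + b * (q * y) by ring]
  linear_combination mul_le_mul_of_nonneg_left hexp (rpow_nonneg hs q) + hab

theorem one_sub_rpow_pos {t q : ℝ} (ht₀ : 0 ≤ t) (ht₁ : t < 1) (hq : 0 < q) : 0 < 1 - t ^ q :=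
  sub_pos.2 (rpow_lt_one ht₀ ht₁ hq)

theorem exp_mul_mem_Icc (x : ℝ) {s : ℝ} (hs : s ∈ Icc (0 : ℝ) 1) :
    exp x * s ∈ Icc 0 (exp x) :=
  ⟨mul_nonneg (exp_pos x).le hs.1, mul_le_of_le_one_right (exp_pos x).le hs.2⟩

namespace ArcsinPQ

variable {p q : ℝ}

theorem continuousOn_integrand (hq : 0 < q) {c : ℝ} (hc : c < 1) :
    ContinuousOn (fun t : ℝ => (1 - t ^ q) ^ (-1 / p)) (Icc 0 c) := fun _ ht =>
  ((continuous_const.sub (continuous_rpow_const hq.le)).continuousAt.rpow_const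
    (Or.inl (one_sub_rpow_pos ht.1 (ht.2.trans_lt hc) hq).ne')).continuousWithinAt

theorem arcsinpq_pos (hq : 0 < q) {c : ℝ} (hc₀ : 0 < c) (hc₁ : c < 1) : 0 < arcsinpq p q c := by
  refine intervalIntegral.intervalIntegral_pos_of_pos_on ?_ (fun t ht => ?_) hc₀
  · exact (continuousOn_integrand hq hc₁).intervalIntegrable_of_Icc hc₀.le
  · exact rpow_pos_of_pos (one_sub_rpow_pos ht.1.le (ht.2.trans hc₁) hq) _

noncomputable def kernel (p q x s : ℝ) : ℝ := exp x * (1 - (exp x * s) ^ q) ^ (-1 / p)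

theorem arcsinpq_exp_eq_setIntegral (p q x : ℝ) :
    arcsinpq p q (exp x) = ∫ s in Ioc 0 1, kernel p q x s := by
  have h := intervalIntegral.smul_integral_comp_mul_left (a := 0) (b := 1)
    (fun t : ℝ => (1 - t ^ q) ^ (-1 / p)) (exp x)
  rw [mul_zero, mul_one] at h
  rw [arcsinpq, ← h, smul_eq_mul, ← intervalIntegral.integral_const_mul,
    intervalIntegral.integral_of_le zero_le_one]
  rfl

variable {x : ℝ}

theorem kernel_pos (hq : 0 < q) (hx : x < 0) {s : ℝ} (hs : s ∈ Icc (0 : ℝ) 1) :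
    0 < kernel p q x s := by
  have h := exp_mul_mem_Icc x hs
  exact mul_pos (exp_pos x)
    (rpow_pos_of_pos (one_sub_rpow_pos h.1 (h.2.trans_lt (exp_lt_one_iff.2 hx)) hq) _)

theorem integrableOn_kernel (hq : 0 < q) (hx : x < 0) :
    IntegrableOn (kernel p q x) (Ioc 0 1) := by
  refine (ContinuousOn.integrableOn_Icc ?_).mono_set Ioc_subset_Icc_self
  exact continuousOn_const.mul ((continuousOn_integrand hq (exp_lt_one_iff.2 hx)).comp
    (continuous_const_mul _).continuousOn fun s hs => exp_mul_mem_Icc x hs)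

theorem kernel_le_rpow_mul_rpow (hp : 0 ≤ p) (hq : 0 < q) {y : ℝ} (hx : x < 0) (hy : y < 0)
    {s : ℝ} (hs : s ∈ Icc (0 : ℝ) 1) {a b : ℝ} (ha : 0 ≤ a) (hb : 0 ≤ b) (hab : a + b = 1) :
    kernel p q (a * x + b * y) s ≤ kernel p q x s ^ a * kernel p q y s ^ b := by
  set φ : ℝ → ℝ := fun x => 1 - (exp x * s) ^ q
  have hφ₀ : ∀ x ∈ Iio (0 : ℝ), 0 < φ x := fun x hx =>
    one_sub_rpow_pos (exp_mul_mem_Icc x hs).1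
      ((exp_mul_mem_Icc x hs).2.trans_lt (exp_lt_one_iff.2 hx)) hq
  have hgeom : φ x ^ a * φ y ^ b ≤ φ (a * x + b * y) :=
    ((concaveOn_one_sub_exp_mul_rpow hs.1 q).subset (subset_univ _)
      (convex_Iio 0)).rpow_mul_rpow_le (fun x hx => (hφ₀ x hx).le) hx hy ha hb hab
  have hexp : exp (a * x + b * y) = exp x ^ a * exp y ^ b := by
    rw [exp_add, ← exp_mul, ← exp_mul, mul_comm a, mul_comm b]
  have hr : -1 / p ≤ 0 := div_nonpos_of_nonpos_of_nonneg (by norm_num) hp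
  have hφx := hφ₀ x hx
  have hφy := hφ₀ y hy
  have hk : ∀ z, kernel p q z s = exp z * φ z ^ (-1 / p) := fun _ => rfl
  calc kernel p q (a * x + b * y) s
      = exp x ^ a * exp y ^ b * φ (a * x + b * y) ^ (-1 / p) := by rw [hk, hexp]
    _ ≤ exp x ^ a * exp y ^ b * (φ x ^ a * φ y ^ b) ^ (-1 / p) := by
        gcongr ?_ * ?_
        exact rpow_le_rpow_of_nonpos (by positivity) hgeom hr
    _ = kernel p q x s ^ a * kernel p q y s ^ b := by
        rw [hk x, hk y, mul_rpow (exp_pos x).le (rpow_nonneg hφx.le _),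
          mul_rpow (exp_pos y).le (rpow_nonneg hφy.le _),
          mul_rpow (rpow_nonneg hφx.le a) (rpow_nonneg hφy.le b), ← rpow_mul hφx.le,
          ← rpow_mul hφy.le, ← rpow_mul hφx.le, ← rpow_mul hφy.le, mul_comm a (-1 / p),
          mul_comm b (-1 / p)]
        ring

end ArcsinPQ

open ArcsinPQ

theorem stmt11 (p q : ℝ) (hp : 1 < p) (hq : 1 < q) :
    ConvexOn ℝ (Iio (0:ℝ)) (fun x => Real.log (arcsinpq p q (Real.exp x))) := by
  have hp₀ : 0 ≤ p := by linarith
  have hq₀ : 0 < q := by linarith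
  refine convexOn_log_comp_of_le_rpow_mul_rpow (convex_Iio 0)
    (fun x hx => arcsinpq_pos hq₀ (exp_pos x) (exp_lt_one_iff.2 hx)) ?_
  intro x hx y hy a b ha hb hab
  have hxy : a * x + b * y ∈ Iio 0 := convex_Iio 0 hx hy ha.le hb.le hab
  have hK₀ : ∀ z ∈ Iio (0 : ℝ), 0 ≤ᵐ[volume.restrict (Ioc 0 1)] kernel p q z := fun z hz =>
    (ae_restrict_mem measurableSet_Ioc).mono fun s hs =>
      (kernel_pos hq₀ hz (Ioc_subset_Icc_self hs)).le
  simp only [smul_eq_mul, arcsinpq_exp_eq_setIntegral]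
  calc ∫ s in Ioc 0 1, kernel p q (a * x + b * y) s
      ≤ ∫ s in Ioc 0 1, kernel p q x s ^ a * kernel p q y s ^ b :=
        setIntegral_mono_on (integrableOn_kernel hq₀ hxy)
          (Integrable.rpow_mul_rpow (hK₀ x hx) (hK₀ y hy) (integrableOn_kernel hq₀ hx)
            (integrableOn_kernel hq₀ hy) ha.le hb.le hab) measurableSet_Ioc
          fun s hs =>
            kernel_le_rpow_mul_rpow hp₀ hq₀ hx hy (Ioc_subset_Icc_self hs) ha.le hb.le hab
    _ ≤ _ := integral_rpow_mul_rpow_le (hK₀ x hx) (hK₀ y hy) (integrableOn_kernel hq₀ hx)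
        (integrableOn_kernel hq₀ hy) ha hb hab
end

section
/- For p, q > 1 and 0 < s ≤ r < 1, one has arsinh_{p,q}(s)/(s^p/(1+s^q))^{1/p} ≤ arsinh_{p,q}(r)/(r^p/(1+r^q))^{1/p}. -/
open Real Set

noncomputable def arsinhpq (p q x : ℝ) : ℝ :=
  ∫ t in (0:ℝ)..x, (1 + t ^ q) ^ (-1/p)

/- The substitution t = xτ turns the quotient into
∫₀¹ ((1 + x^q) / (1 + (xτ)^q))^{1/p} dτ, and for fixed τ ∈ [0, 1] the integrand is increasing in x,
because a ↦ (1 + a) / (1 + a c) is increasing for 0 ≤ c ≤ 1. -/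

lemma one_add_rpow_pos (q : ℝ) {x : ℝ} (hx : 0 ≤ x) : 0 < 1 + x ^ q := by
  linarith [rpow_nonneg hx q]

lemma one_add_div_one_add_mul_le {a b c : ℝ} (ha : 0 ≤ a) (hab : a ≤ b) (hc : 0 ≤ c)
    (hc1 : c ≤ 1) : (1 + a) / (1 + a * c) ≤ (1 + b) / (1 + b * c) := by
  rw [div_le_div_iff₀ (by positivity) (by nlinarith)]
  nlinarith [mul_nonneg (sub_nonneg.2 hab) (sub_nonneg.2 hc1)]

lemma one_add_rpow_div_one_add_mul_rpow_le {q s r τ : ℝ} (hq : 0 ≤ q) (hs : 0 ≤ s) (hsr : s ≤ r)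
    (hτ : τ ∈ Icc (0:ℝ) 1) :
    (1 + s ^ q) / (1 + (s * τ) ^ q) ≤ (1 + r ^ q) / (1 + (r * τ) ^ q) := by
  rw [mul_rpow hs hτ.1, mul_rpow (hs.trans hsr) hτ.1]
  exact one_add_div_one_add_mul_le (rpow_nonneg hs q) (rpow_le_rpow hs hsr hq)
    (rpow_nonneg hτ.1 q) (rpow_le_one hτ.1 hτ.2 hq)

lemma arsinhpq_eq_mul_integral (p q x : ℝ) :
    arsinhpq p q x = x * ∫ τ in (0:ℝ)..1, (1 + (x * τ) ^ q) ^ (-1/p) := by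
  have := intervalIntegral.smul_integral_comp_mul_left
    (fun t : ℝ => (1 + t ^ q) ^ (-1/p)) (a := 0) (b := 1) x
  rw [smul_eq_mul, mul_zero, mul_one] at this
  rw [arsinhpq, ← this]

lemma arsinhpq_div_eq_integral {p : ℝ} (q : ℝ) {x : ℝ} (hp : 0 < p) (hx : 0 < x) :
    arsinhpq p q x / (x ^ p / (1 + x ^ q)) ^ (1/p)
      = ∫ τ in (0:ℝ)..1, ((1 + x ^ q) / (1 + (x * τ) ^ q)) ^ (1/p) := by
  have hb : 0 < 1 + x ^ q := one_add_rpow_pos q hx.le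
  have hden : (x ^ p / (1 + x ^ q)) ^ (1/p) = x / (1 + x ^ q) ^ (1/p) := by
    rw [div_rpow (by positivity) hb.le, ← rpow_mul hx.le, mul_one_div, div_self hp.ne', rpow_one]
  rw [arsinhpq_eq_mul_integral, hden, div_div_eq_mul_div, mul_assoc, mul_div_cancel_left₀ _ hx.ne',
    mul_comm, ← intervalIntegral.integral_const_mul]
  refine intervalIntegral.integral_congr fun τ hτ => ?_
  rw [uIcc_of_le zero_le_one] at hτ
  have hτb : 0 < 1 + (x * τ) ^ q := one_add_rpow_pos q (mul_nonneg hx.le hτ.1)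
  rw [div_rpow hb.le hτb.le, neg_div, rpow_neg hτb.le, ← div_eq_mul_inv]

lemma intervalIntegrable_one_add_rpow_div_rpow (c : ℝ) {q x : ℝ} (hq : 0 ≤ q) (hx : 0 ≤ x) :
    IntervalIntegrable (fun τ => ((1 + x ^ q) / (1 + (x * τ) ^ q)) ^ c) MeasureTheory.volume 0 1 := by
  refine ContinuousOn.intervalIntegrable_of_Icc zero_le_one ?_
  have hbase : Continuous fun τ : ℝ => 1 + (x * τ) ^ q := by fun_prop
  have hpos : ∀ τ ∈ Icc (0:ℝ) 1, 0 < 1 + (x * τ) ^ q := fun τ hτ =>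
    one_add_rpow_pos q (mul_nonneg hx hτ.1)
  exact (continuousOn_const.div hbase.continuousOn fun τ hτ => (hpos τ hτ).ne').rpow_const
    fun τ hτ => Or.inl (div_pos (one_add_rpow_pos q hx) (hpos τ hτ)).ne'

theorem stmt18_general (p q r s : ℝ) (hp : 1 < p) (hq : 1 < q)
    (hs : 0 < s) (hsr : s ≤ r) :
    arsinhpq p q s / (s ^ p / (1 + s ^ q)) ^ (1/p) ≤
      arsinhpq p q r / (r ^ p / (1 + r ^ q)) ^ (1/p) := by
  have hp0 : 0 < p := by linarith
  have hq0 : 0 ≤ q := by linarith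
  have hr : 0 < r := hs.trans_le hsr
  rw [arsinhpq_div_eq_integral q hp0 hs, arsinhpq_div_eq_integral q hp0 hr]
  refine intervalIntegral.integral_mono_on zero_le_one
    (intervalIntegrable_one_add_rpow_div_rpow _ hq0 hs.le)
    (intervalIntegrable_one_add_rpow_div_rpow _ hq0 hr.le) fun τ hτ =>
      rpow_le_rpow (div_pos (one_add_rpow_pos q hs.le)
        (one_add_rpow_pos q (mul_nonneg hs.le hτ.1))).le
      (one_add_rpow_div_one_add_mul_rpow_le hq0 hs.le hsr hτ) (by positivity)

theorem stmt18 (p q r s : ℝ) (hp : 1 < p) (hq : 1 < q)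
    (hs : 0 < s) (hsr : s ≤ r) (hr : r < 1) :
    arsinhpq p q s / (s ^ p / (1 + s ^ q)) ^ (1/p) ≤
      arsinhpq p q r / (r ^ p / (1 + r ^ q)) ^ (1/p) :=
  stmt18_general p q r s hp hq hs hsr
end
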